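/- Fix t ∈ [0,1), n with 2^N ≤ n < 2^{N+1}, and m = ∑_{i=0}^{N−1} t_{i+1} 2^i. For each 0 ≤ i ≤ N−1, ∫_{I_i \ I_{i+1}} |D̃_n^{(t)}| dμ = max(α_i(n), 2 α_i(m)) / 2^{i+1}, where α_i(k) = |∑_{j=0}^{i−1} k_j 2^j − k_i 2^i|. -/

import Mathlib

open MeasureTheory Finset

noncomputable section

/-- The dyadic group: countable product of ℤ/2. -/
abbrev G := ℕ → ZMod 2

/-- Binary digits of a real number, as an element of the dyadic group. -/
def toG (x : ℝ) : G := fun n => ((⌊x * 2 ^ (n + 1)⌋ : ℤ) : ZMod 2)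

/-- Haar (product) measure on the dyadic group, realized as the pushforward
of Lebesgue measure on `[0,1)` under the binary digit map. -/
def muG : Measure G := (volume.restrict (Set.Ico (0:ℝ) 1)).map toG

/-- Walsh–Paley functions. -/
def walsh (m : ℕ) (x : G) : ℝ :=
  ∏ k ∈ Finset.range m, if m.testBit k then (-1 : ℝ) ^ ((x k).val) else 1

/-- Walsh–Dirichlet kernel. -/
def Dir (n : ℕ) (x : G) : ℝ := ∑ k ∈ Finset.range n, walsh k x

/-- Dyadic interval `I_n` of rank `n` about `0`. -/
def Iset (n : ℕ) : Set G := {x | ∀ i < n, x i = 0}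

/-- `k`-th binary digit of `n`, as a natural number. -/
def bit (n k : ℕ) : ℕ := (n.testBit k).toNat

/-- `α_i(n) = |∑_{k<i} n_k 2^k − n_i 2^i|`. -/
def alpha (n i : ℕ) : ℤ :=
  |(∑ k ∈ Finset.range i, (bit n k : ℤ) * 2 ^ k) - (bit n i : ℤ) * 2 ^ i|

/-- Binary variation `V(n) = n_0 + ∑_{k≥1} |n_k − n_{k−1}|`. -/
def V (n : ℕ) : ℕ :=
  bit n 0 + ∑ k ∈ Finset.range n, if n.testBit (k+1) ≠ n.testBit k then 1 else 0

/-- `A(n)`: indices where consecutive binary digits differ (with `n_{−1} = 0`). -/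
def Aset (n : ℕ) : Finset ℕ :=
  (Finset.range (n+1)).filter
    (fun i => if i = 0 then n.testBit 0 else n.testBit i ≠ n.testBit (i-1))

/-- `S(n) = ∑_{i ∈ A(n)} α_i(n)/2^{i+1}`. -/
def S (n : ℕ) : ℝ := ∑ i ∈ Aset n, (alpha n i : ℝ) / 2 ^ (i+1)

/-- `j`-th binary digit of a real number `t ∈ [0,1)`. -/
def tdig (t : ℝ) (j : ℕ) : ℕ := (⌊t * 2 ^ (j+1)⌋ % 2).toNat

/-- `m = ∑_{i=0}^{N-1} t_{i+1} 2^i`. -/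
def mOf (t : ℝ) (N : ℕ) : ℕ := ∑ i ∈ Finset.range N, tdig t (i+1) * 2 ^ i

/-- Conjugate Walsh–Dirichlet kernel
`D̃_n^{(t)} = D_n − 2 w_m D_m − 2 t_{N+1}(D_n − D_{2^N})` where `m = mOf t N`. -/
def Dconj (t : ℝ) (N n : ℕ) (x : G) : ℝ :=
  Dir n x - 2 * walsh (mOf t N) x * Dir (mOf t N) x
    - 2 * (tdig t (N+1) : ℝ) * (Dir n x - Dir (2^N) x)

/-- Lebesgue constant of the conjugate transform. -/
def Leb (t : ℝ) (N n : ℕ) : ℝ := ∫ x, |Dconj t N n x| ∂muG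

/-- `T(a,b) = {i : 1 ≤ i ≤ N−1, a_i ≠ a_{i−1}, b_i = b_{i−1}}`. -/
def Tset (N a b : ℕ) : Finset ℕ :=
  (Finset.Icc 1 (N-1)).filter
    (fun i => a.testBit i ≠ a.testBit (i-1) ∧ b.testBit i = b.testBit (i-1))

/-!
On the shell `I_i \ I_{i+1}` (points with `x_k = 0` for `k < i` and `x_i = 1`) every
Walsh–Dirichlet kernel factors as `D_k = w_k · σ_i(k)` with `σ_i(k) = (k mod 2^i) − k_i 2^i`,
and `D_{2^N}` vanishes for `N > i`; hence `D̃_n^{(t)} = ±w_n σ_i(n) − 2σ_i(m)` there, with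
`|σ_i| = α_i`. The kernel depends only on the coordinates `0, …, N`, and flipping the
coordinate `N` preserves the shell and the Haar measure while changing the sign of `w_n`.
Averaging a point with its flip, `|a − b| + |a + b| = 2 max(|a|, |b|)`, so the integral is
`max(α_i(n), 2α_i(m)) μ(I_i \ I_{i+1})`, and the same flip invariance (at the coordinate `i`)
gives `μ(I_i \ I_{i+1}) = μ(I_{i+1}) = 2^{-(i+1)}`. Flip invariance comes from writing the
integral of a function of the first `M` coordinates as the average of its values on the `2^M`
dyadic intervals of `[0,1)`.
-/

lemma ZMod.two_cases (z : ZMod 2) : z = 0 ∨ z = 1 := by revert z; decide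

lemma Nat.lt_of_testBit_of_lt_two_pow {k l M : ℕ} (hk : k < 2 ^ M) (hl : k.testBit l) : l < M :=
  (Nat.pow_lt_pow_iff_right (by norm_num)).1 ((Nat.ge_two_pow_of_testBit hl).trans_lt hk)

lemma Nat.testBit_of_two_pow_le_of_lt_two_pow {n N : ℕ} (h1 : 2 ^ N ≤ n)
    (h2 : n < 2 ^ (N + 1)) : n.testBit N := by
  obtain ⟨r, rfl⟩ := Nat.exists_eq_add_of_le h1
  rw [Nat.testBit_two_pow_add_eq, Nat.testBit_lt_two_pow (by rw [pow_succ] at h2; omega)]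
  rfl

lemma bit_eq_div_two_pow_mod_two (n k : ℕ) : bit n k = n / 2 ^ k % 2 := by
  rw [bit, Nat.testBit_eq_decide_div_mod_eq]
  rcases Nat.mod_two_eq_zero_or_one (n / 2 ^ k) with h | h <;> simp [h]

lemma sum_range_bit_mul_two_pow (n i : ℕ) : ∑ k ∈ range i, bit n k * 2 ^ k = n % 2 ^ i := by
  induction i with
  | zero => simp [Nat.mod_one]
  | succ i ih => rw [sum_range_succ, ih, Nat.mod_pow_succ, bit_eq_div_two_pow_mod_two]; ring

/-- The signed quantity behind `alpha`, with `∑_{k<i} n_k 2^k` written as `n % 2^i`. -/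
def alphaSigned (n i : ℕ) : ℝ := ((n % 2 ^ i : ℕ) : ℝ) - bit n i * 2 ^ i

lemma abs_alphaSigned (n i : ℕ) : |alphaSigned n i| = alpha n i := by
  rw [alpha, alphaSigned, ← sum_range_bit_mul_two_pow]
  push_cast [Int.cast_abs]
  rfl

lemma alphaSigned_of_lt {n i : ℕ} (hn : n < 2 ^ i) : alphaSigned n i = n := by
  simp [alphaSigned, Nat.mod_eq_of_lt hn, bit, Nat.testBit_lt_two_pow hn]

lemma alphaSigned_two_pow_add_self {i r : ℕ} (hr : r < 2 ^ i) :
    alphaSigned (2 ^ i + r) i = r - 2 ^ i := by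
  simp [alphaSigned, Nat.mod_eq_of_lt hr, bit, Nat.testBit_two_pow_add_eq,
    Nat.testBit_lt_two_pow hr]

lemma alphaSigned_two_pow_add {i j : ℕ} (hij : i < j) (r : ℕ) :
    alphaSigned (2 ^ j + r) i = alphaSigned r i := by
  rw [alphaSigned, alphaSigned, bit, bit, Nat.testBit_two_pow_add_gt hij, Nat.add_mod,
    Nat.mod_eq_zero_of_dvd (Nat.pow_dvd_pow 2 hij.le), zero_add, Nat.mod_mod]

lemma walsh_mul_self (n : ℕ) (y : G) : walsh n y * walsh n y = 1 := by
  rw [walsh, ← prod_mul_distrib]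
  refine prod_eq_one fun k _ => ?_
  split_ifs <;> simp [← pow_add, Even.neg_one_pow ⟨(y k).val, rfl⟩]

lemma abs_walsh (n : ℕ) (y : G) : |walsh n y| = 1 := by
  rcases mul_self_eq_one_iff.mp (walsh_mul_self n y) with h | h <;> simp [h]

lemma walsh_congr {n : ℕ} {y z : G} (h : ∀ k, n.testBit k → y k = z k) :
    walsh n y = walsh n z := by
  refine prod_congr rfl fun k _ => ?_
  split_ifs with hk
  · rw [h k hk]
  · rfl

lemma walsh_eq_one_of_mem_Iset {i k : ℕ} {y : G} (hy : y ∈ Iset i) (hk : k < 2 ^ i) :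
    walsh k y = 1 := by
  rw [walsh_congr (z := 0) fun l hl => hy l (Nat.lt_of_testBit_of_lt_two_pow hk hl)]
  simp [walsh]

lemma walsh_eq_prod_range {n M : ℕ} (hn : n < 2 ^ M) (y : G) :
    walsh n y = ∏ k ∈ range M, if n.testBit k then (-1 : ℝ) ^ (y k).val else 1 := by
  have key : ∀ L K, L ≤ K → n < 2 ^ L →
      ∏ k ∈ range L, (if n.testBit k then (-1 : ℝ) ^ (y k).val else 1)
        = ∏ k ∈ range K, if n.testBit k then (-1 : ℝ) ^ (y k).val else 1 := by
    intro L K hLK hL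
    refine prod_subset (range_subset_range.2 hLK) fun k _ hk => ?_
    have hLk : L ≤ k := by simpa using hk
    simp [Nat.testBit_lt_two_pow (hL.trans_le (Nat.pow_le_pow_right two_pos hLk))]
  rcases le_total n M with h | h
  · exact key n M h n.lt_two_pow_self
  · exact (key M n h hn).symm

lemma walsh_two_pow (j : ℕ) (y : G) : walsh (2 ^ j) y = (-1) ^ (y j).val := by
  rw [walsh, prod_eq_single j]
  · simp
  · intro k _ hk; simp [Ne.symm hk]
  · simp [Nat.lt_two_pow_self]

lemma walsh_two_pow_add {j l : ℕ} (hl : l < 2 ^ j) (y : G) :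
    walsh (2 ^ j + l) y = walsh (2 ^ j) y * walsh l y := by
  have hlt : 2 ^ j + l < 2 ^ (j + 1) := by rw [pow_succ]; omega
  rw [walsh_eq_prod_range hlt, prod_range_succ, walsh_two_pow, walsh_eq_prod_range hl,
    Nat.testBit_two_pow_add_eq, Nat.testBit_lt_two_pow hl, mul_comm]
  simp only [Bool.not_false, if_true]
  congr 1
  exact prod_congr rfl fun k hk => by rw [Nat.testBit_two_pow_add_gt (mem_range.1 hk)]

lemma walsh_add_single {n j : ℕ} (hj : n.testBit j) (y : G) :
    walsh n (y + Pi.single j 1) = -walsh n y := by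
  have hjn : j ∈ range n := mem_range.2 (Nat.lt_of_testBit_of_lt_two_pow n.lt_two_pow_self hj)
  rw [walsh, walsh, ← mul_prod_erase _ _ hjn, ← mul_prod_erase _ _ hjn,
    prod_congr rfl fun k hk => by
      rw [Pi.add_apply, Pi.single_eq_of_ne (ne_of_mem_erase hk), add_zero]]
  rcases ZMod.two_cases (y j) with h | h <;>
    simp [hj, h, ZMod.val_one, (by decide : (1 + 1 : ZMod 2) = 0)]

lemma mem_Iset_sdiff_succ_iff {i : ℕ} {y : G} :
    y ∈ Iset i \ Iset (i + 1) ↔ y ∈ Iset i ∧ y i = 1 := by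
  simp only [Iset, Set.mem_sdiff, Set.mem_ofPred_eq, Nat.forall_lt_succ_right]
  rcases ZMod.two_cases (y i) with h | h <;> simp [h]

section Dirichlet

variable {i : ℕ} {y : G}

lemma Dir_two_pow_add {j r : ℕ} (hr : r ≤ 2 ^ j) :
    Dir (2 ^ j + r) y = Dir (2 ^ j) y + walsh (2 ^ j) y * Dir r y := by
  rw [Dir, Dir, Dir, sum_range_add, mul_sum]
  exact congrArg _ (sum_congr rfl fun l hl => walsh_two_pow_add ((mem_range.1 hl).trans_le hr) y)

lemma Dir_of_mem_Iset (hy : y ∈ Iset i) {n : ℕ} (hn : n ≤ 2 ^ i) : Dir n y = n := by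
  rw [Dir, sum_congr rfl fun k hk => walsh_eq_one_of_mem_Iset hy ((mem_range.1 hk).trans_le hn)]
  simp

lemma Dir_two_pow_eq_zero (hy : y ∈ Iset i) (hyi : y i = 1) {j : ℕ} (hij : i < j) :
    Dir (2 ^ j) y = 0 := by
  induction j, hij using Nat.le_induction with
  | base =>
    rw [pow_succ, mul_two, Dir_two_pow_add le_rfl, walsh_two_pow, hyi, Dir_of_mem_Iset hy le_rfl]
    simp [ZMod.val_one]
  | succ j _ ih => rw [pow_succ, mul_two, Dir_two_pow_add le_rfl, ih]; ring

lemma Dir_eq_walsh_mul_alphaSigned (hy : y ∈ Iset i) (hyi : y i = 1) (n : ℕ) :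
    Dir n y = walsh n y * alphaSigned n i := by
  induction n using Nat.strong_induction_on with | _ n ih => ?_
  rcases lt_or_ge n (2 ^ i) with hn | hn
  · rw [Dir_of_mem_Iset hy hn.le, walsh_eq_one_of_mem_Iset hy hn, alphaSigned_of_lt hn, one_mul]
  obtain ⟨j, hj, hj'⟩ : ∃ j, 2 ^ j ≤ n ∧ n < 2 ^ (j + 1) :=
    ⟨Nat.log 2 n, Nat.pow_log_le_self 2 (Nat.pos_iff_ne_zero.1 (Nat.one_le_two_pow.trans hn)),
      Nat.lt_pow_succ_log_self one_lt_two n⟩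
  have hij : i ≤ j :=
    Nat.lt_succ_iff.1 ((Nat.pow_lt_pow_iff_right (by norm_num)).1 (hn.trans_lt hj'))
  obtain ⟨r, rfl⟩ := Nat.exists_eq_add_of_le hj
  have hr : r < 2 ^ j := by rw [pow_succ] at hj'; omega
  rw [Dir_two_pow_add hr.le, walsh_two_pow_add hr]
  rcases hij.eq_or_lt with hij | hij
  · rw [← hij] at hr ⊢
    rw [Dir_of_mem_Iset hy le_rfl, Dir_of_mem_Iset hy hr.le, walsh_eq_one_of_mem_Iset hy hr,
      walsh_two_pow, hyi, alphaSigned_two_pow_add_self hr]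
    simp [ZMod.val_one]
    ring
  · rw [Dir_two_pow_eq_zero hy hyi hij, ih r (by have := Nat.one_le_two_pow (n := j); omega),
      alphaSigned_two_pow_add hij]
    ring

end Dirichlet

section Dependence

variable {M : ℕ}

lemma dependsOn_walsh {n : ℕ} (hn : n < 2 ^ M) : DependsOn (walsh n) (Set.Iio M) :=
  fun _ _ h => walsh_congr fun k hk => h k (Nat.lt_of_testBit_of_lt_two_pow hn hk)

lemma dependsOn_Dir {n : ℕ} (hn : n ≤ 2 ^ M) : DependsOn (Dir n) (Set.Iio M) :=
  fun _ _ h => sum_congr rfl fun _ hk => dependsOn_walsh ((mem_range.1 hk).trans_le hn) h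

lemma dependsOn_mem_Iset (i : ℕ) : DependsOn (· ∈ Iset i) (Set.Iio i) :=
  fun _ _ h => propext <| forall₂_congr fun k hk => by rw [h k hk]

lemma dependsOn_mem_shell (i : ℕ) :
    DependsOn (· ∈ Iset i \ Iset (i + 1)) (Set.Iio (i + 1)) := by
  intro y z h
  have h0 := (dependsOn_mem_Iset i).mono (Set.Iio_subset_Iio i.le_succ) h
  have h1 := dependsOn_mem_Iset (i + 1) h
  simp only [Set.mem_sdiff] at h0 h1 ⊢
  rw [h0, h1]

lemma add_single_mem_shell_iff {i j : ℕ} (hij : i < j) {y : G} :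
    y + Pi.single j 1 ∈ Iset i \ Iset (i + 1) ↔ y ∈ Iset i \ Iset (i + 1) :=
  .of_eq <| dependsOn_mem_shell i fun k hk => by simp [(show k < j by simp at hk; omega).ne]

lemma DependsOn.indicator {ι β : Type*} {α : ι → Type*} [Zero β] {s : Set (∀ i, α i)}
    {f : (∀ i, α i) → β} {S : Set ι} (hs : DependsOn (· ∈ s) S) (hf : DependsOn f S) :
    DependsOn (s.indicator f) S :=
  fun x y h => by
    classical
    rw [Set.indicator_apply, Set.indicator_apply, hf h]
    exact if_congr (.of_eq (hs h)) rfl rfl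

lemma DependsOn.comp_add_right {ι β : Type*} {α : ι → Type*} [∀ i, Add (α i)]
    {f : (∀ i, α i) → β} {S : Set ι} (hf : DependsOn f S) (c : ∀ i, α i) :
    DependsOn (fun x => f (x + c)) S :=
  fun x y h => hf fun i hi => by simp [h i hi]

end Dependence

lemma measurable_walsh (n : ℕ) : Measurable (walsh n) :=
  Finset.measurable_prod _ fun k _ =>
    (measurable_of_finite fun z : ZMod 2 => if n.testBit k then (-1 : ℝ) ^ z.val else 1).comp
      (measurable_pi_apply k)

lemma measurable_Dir (n : ℕ) : Measurable (Dir n) :=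
  Finset.measurable_sum _ fun k _ => measurable_walsh k

lemma measurableSet_Iset (i : ℕ) : MeasurableSet (Iset i) := by
  simp only [Iset, Set.ofPred_forall]
  exact .iInter fun k => .iInter fun _ =>
    measurableSet_eq_fun (measurable_pi_apply k) measurable_const

lemma tdig_le_one (t : ℝ) (j : ℕ) : tdig t j ≤ 1 := by
  have := Int.emod_lt_of_pos ⌊t * 2 ^ (j + 1)⌋ two_pos
  rw [tdig]; omega

lemma abs_one_sub_two_mul_tdig (t : ℝ) (j : ℕ) : |1 - 2 * (tdig t j : ℝ)| = 1 := by
  have := tdig_le_one t j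
  interval_cases tdig t j <;> norm_num

lemma mOf_lt_two_pow (t : ℝ) (N : ℕ) : mOf t N < 2 ^ N := by
  induction N with
  | zero => simp [mOf]
  | succ N ih =>
    rw [mOf, sum_range_succ, ← mOf, pow_succ]
    nlinarith [tdig_le_one t (N + 1)]

lemma measurable_Dconj (t : ℝ) (N n : ℕ) : Measurable (Dconj t N n) := by
  have := measurable_walsh (mOf t N)
  have := measurable_Dir
  unfold Dconj
  fun_prop

section Dconj

variable {t : ℝ} {N n i : ℕ}

lemma dependsOn_Dconj (hn : n < 2 ^ (N + 1)) : DependsOn (Dconj t N n) (Set.Iio (N + 1)) := by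
  have hm : mOf t N < 2 ^ (N + 1) := (mOf_lt_two_pow t N).trans (Nat.pow_lt_pow_succ one_lt_two)
  intro y z h
  rw [Dconj, Dconj, dependsOn_Dir hn.le h, dependsOn_Dir hm.le h, dependsOn_walsh hm h,
    dependsOn_Dir (Nat.pow_le_pow_right two_pos N.le_succ) h]

lemma Dconj_of_mem_shell (hi : i < N) {y : G} (hy : y ∈ Iset i) (hyi : y i = 1) :
    Dconj t N n y = (1 - 2 * (tdig t (N + 1) : ℝ)) * walsh n y * alphaSigned n i
      - 2 * alphaSigned (mOf t N) i := by
  rw [Dconj, Dir_eq_walsh_mul_alphaSigned hy hyi, Dir_eq_walsh_mul_alphaSigned hy hyi,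
    Dir_two_pow_eq_zero hy hyi hi]
  linear_combination (-2 * alphaSigned (mOf t N) i) * walsh_mul_self (mOf t N) y

lemma abs_sub_add_abs_add (a b : ℝ) : |a - b| + |a + b| = 2 * max |a| |b| := by
  rcases abs_cases (a - b) with ⟨h1, h1'⟩ | ⟨h1, h1'⟩ <;>
    rcases abs_cases (a + b) with ⟨h2, h2'⟩ | ⟨h2, h2'⟩ <;>
      rcases abs_cases a with ⟨h3, h3'⟩ | ⟨h3, h3'⟩ <;>
        rcases abs_cases b with ⟨h4, h4'⟩ | ⟨h4, h4'⟩ <;>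
          rcases max_cases |a| |b| with ⟨h5, h5'⟩ | ⟨h5, h5'⟩ <;>
            rw [h1, h2, h5] at * <;> linarith

/-- Flipping the coordinate `N` changes the sign of `walsh n` and fixes the shell. -/
lemma abs_Dconj_add_abs_Dconj_add_single (h1 : 2 ^ N ≤ n) (h2 : n < 2 ^ (N + 1)) (hi : i < N)
    {y : G} (hy : y ∈ Iset i \ Iset (i + 1)) :
    |Dconj t N n y| + |Dconj t N n (y + Pi.single N 1)|
      = 2 * max (alpha n i : ℝ) (2 * (alpha (mOf t N) i : ℝ)) := by
  obtain ⟨hyI, hyi⟩ := mem_Iset_sdiff_succ_iff.1 hy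
  obtain ⟨hyI', hyi'⟩ := mem_Iset_sdiff_succ_iff.1 ((add_single_mem_shell_iff hi).2 hy)
  rw [Dconj_of_mem_shell hi hyI hyi, Dconj_of_mem_shell hi hyI' hyi',
    walsh_add_single (Nat.testBit_of_two_pow_le_of_lt_two_pow h1 h2)]
  set a := (1 - 2 * (tdig t (N + 1) : ℝ)) * walsh n y * alphaSigned n i
  set b := 2 * alphaSigned (mOf t N) i
  have hb : |b| = 2 * (alpha (mOf t N) i : ℝ) := by simp [b, abs_mul, abs_alphaSigned]
  have ha : |a| = alpha n i := by
    simp [a, abs_mul, abs_one_sub_two_mul_tdig, abs_walsh, abs_alphaSigned]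
  rw [show (1 - 2 * (tdig t (N + 1) : ℝ)) * -walsh n y * alphaSigned n i - b = -(a + b) by ring,
    abs_neg, abs_sub_add_abs_add, ha, hb]

lemma shell_indicator_abs_Dconj_add_single (h1 : 2 ^ N ≤ n) (h2 : n < 2 ^ (N + 1)) (hi : i < N)
    (y : G) :
    (Iset i \ Iset (i + 1)).indicator (fun y => |Dconj t N n y|) y
      + (Iset i \ Iset (i + 1)).indicator (fun y => |Dconj t N n y|) (y + Pi.single N 1)
      = (Iset i \ Iset (i + 1)).indicator
          (fun _ => 2 * max (alpha n i : ℝ) (2 * (alpha (mOf t N) i : ℝ))) y := by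
  by_cases hy : y ∈ Iset i \ Iset (i + 1)
  · rw [Set.indicator_of_mem hy, Set.indicator_of_mem ((add_single_mem_shell_iff hi).2 hy),
      Set.indicator_of_mem hy]
    exact abs_Dconj_add_abs_Dconj_add_single h1 h2 hi hy
  · rw [Set.indicator_of_notMem hy,
      Set.indicator_of_notMem (mt (add_single_mem_shell_iff hi).1 hy),
      Set.indicator_of_notMem hy, add_zero]

end Dconj

lemma integral_Ico_comp_natFloor_mul (g : ℕ → ℝ) {M : ℕ} (hM : 0 < M) :
    ∫ x in Set.Ico (0 : ℝ) 1, g ⌊x * M⌋₊ = (∑ q ∈ range M, g q) / M := by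
  have hconst (q : ℕ) :
      Set.EqOn (fun u : ℝ => g ⌊u⌋₊) (fun _ => g q) (Set.Ico q (q + 1)) := fun u hu => by simp only [Nat.floor_eq_on_Ico q u hu]
  have hpiece (q : ℕ) : ∫ u in (q : ℝ)..((q + 1 : ℕ) : ℝ), g ⌊u⌋₊ = g q := by
    rw [intervalIntegral.integral_of_le (by simp), ← integral_Ico_eq_integral_Ioc, Nat.cast_succ,
      setIntegral_congr_fun measurableSet_Ico (hconst q)]
    simp
  have hint : ∀ q < M, IntervalIntegrable (fun u : ℝ => g ⌊u⌋₊) volume q (q + 1 : ℕ) :=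
    fun q _ => by
      rw [intervalIntegrable_iff_integrableOn_Ico_of_le (by simp), Nat.cast_succ]
      exact (integrableOn_const (by simp)).congr_fun (hconst q).symm measurableSet_Ico
  rw [integral_Ico_eq_integral_Ioc, ← intervalIntegral.integral_of_le zero_le_one,
    intervalIntegral.integral_comp_mul_right (fun u => g ⌊u⌋₊) (by positivity), zero_mul,
    one_mul, smul_eq_mul, ← Nat.cast_zero,
    ← intervalIntegral.sum_integral_adjacent_intervals hint]
  simp only [hpiece]
  ring

lemma measurable_toG : Measurable toG :=
  measurable_pi_lambda _ fun _ =>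
    (measurable_of_countable fun z : ℤ => (z : ZMod 2)).comp (measurable_id.mul_const _).floor

instance isProbabilityMeasure_muG : IsProbabilityMeasure muG :=
  ⟨by rw [muG, Measure.map_apply measurable_toG .univ]; simp⟩

lemma toG_apply {x : ℝ} (hx : 0 ≤ x) {M k : ℕ} (hk : k < M) :
    toG x k = bit ⌊x * 2 ^ M⌋₊ (M - (k + 1)) := by
  have hpow : x * 2 ^ (k + 1) = x * 2 ^ M / ((2 ^ (M - (k + 1)) : ℕ) : ℝ) := by
    rw [eq_div_iff (by positivity), mul_assoc, Nat.cast_pow, Nat.cast_ofNat, ← pow_add,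
      Nat.add_sub_cancel' hk]
  rw [toG, hpow, ← Int.natCast_floor_eq_floor (by positivity), Nat.floor_div_natCast,
    Int.cast_natCast, bit_eq_div_two_pow_mod_two, ZMod.natCast_mod]

lemma toG_natCast_div_two_pow_apply (q : ℕ) {M k : ℕ} (hk : k < M) :
    toG (q / 2 ^ M) k = bit q (M - (k + 1)) := by
  rw [toG_apply (by positivity) hk, div_mul_cancel₀ _ (by positivity), Nat.floor_natCast]

section Cylinder

variable {M : ℕ} {f : G → ℝ}

lemma comp_toG_eq (hf : DependsOn f (Set.Iio M)) {x : ℝ} (hx : 0 ≤ x) :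
    f (toG x) = f (toG (⌊x * 2 ^ M⌋₊ / 2 ^ M)) :=
  hf fun _ hk => by rw [toG_apply hx hk, toG_natCast_div_two_pow_apply _ hk]

lemma integrable_muG (hfm : Measurable f) (hf : DependsOn f (Set.Iio M)) : Integrable f muG := by
  rw [muG, integrable_map_measure hfm.aestronglyMeasurable measurable_toG.aemeasurable]
  refine Measure.integrableOn_of_bounded (M := ∑ q ∈ range (2 ^ M), |f (toG (q / 2 ^ M))|)
    measure_Ico_lt_top.ne (hfm.comp measurable_toG).aestronglyMeasurable ?_
  filter_upwards [ae_restrict_mem measurableSet_Ico] with x hx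
  have hq : ⌊x * 2 ^ M⌋₊ < 2 ^ M := by
    rw [Nat.floor_lt (mul_nonneg hx.1 (by positivity))]
    push_cast
    nlinarith [hx.2, pow_pos (two_pos (α := ℝ)) M]
  rw [Function.comp_apply, comp_toG_eq hf hx.1, Real.norm_eq_abs]
  exact single_le_sum (f := fun q : ℕ => |f (toG (q / 2 ^ M))|) (fun _ _ => abs_nonneg _)
    (mem_range.2 hq)

lemma integral_muG_eq_sum (hfm : Measurable f) (hf : DependsOn f (Set.Iio M)) :
    ∫ y, f y ∂muG = (∑ q ∈ range (2 ^ M), f (toG (q / 2 ^ M))) / 2 ^ M := by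
  rw [muG, integral_map measurable_toG.aemeasurable hfm.aestronglyMeasurable,
    setIntegral_congr_fun measurableSet_Ico fun x hx => comp_toG_eq hf hx.1]
  simpa using integral_Ico_comp_natFloor_mul (fun q => f (toG (q / 2 ^ M))) (M := 2 ^ M)
    (by positivity)

lemma toG_div_two_pow_add_single {j k : ℕ} (hj : j < M) (hk : k < M) (q : ℕ) :
    (toG (q / 2 ^ M) + Pi.single j 1 : G) k
      = toG (((q ^^^ 2 ^ (M - (j + 1)) : ℕ) : ℝ) / 2 ^ M) k := by
  rw [Pi.add_apply, toG_natCast_div_two_pow_apply _ hk, toG_natCast_div_two_pow_apply _ hk, bit,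
    bit, Nat.testBit_xor, Nat.testBit_two_pow]
  by_cases hkj : k = j
  · subst hkj
    cases q.testBit (M - (k + 1)) <;> simp [(by decide : (1 + 1 : ZMod 2) = 0)]
  · rw [Pi.single_eq_of_ne hkj, decide_eq_false (by omega)]
    simp

lemma integral_comp_add_single (hfm : Measurable f) (hf : DependsOn f (Set.Iio M)) {j : ℕ}
    (hj : j < M) : ∫ y, f (y + Pi.single j 1) ∂muG = ∫ y, f y ∂muG := by
  have hc : 2 ^ (M - (j + 1)) < 2 ^ M := Nat.pow_lt_pow_right one_lt_two (by omega)
  refine (integral_muG_eq_sum (hfm.comp (measurable_add_const _)) (hf.comp_add_right _)).trans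
    ?_
  rw [integral_muG_eq_sum hfm hf]
  congr 1
  refine sum_nbij' (· ^^^ 2 ^ (M - (j + 1))) (· ^^^ 2 ^ (M - (j + 1))) ?_ ?_ ?_ ?_ ?_
    <;> simp only [mem_range]
  · exact fun q hq => Nat.xor_lt_two_pow hq hc
  · exact fun q hq => Nat.xor_lt_two_pow hq hc
  · simp
  · simp
  · exact fun q _ => hf fun k hk => toG_div_two_pow_add_single hj hk q

end Cylinder

lemma Iset_sdiff_succ_eq_preimage (i : ℕ) :
    Iset i \ Iset (i + 1) = (· + Pi.single i 1) ⁻¹' Iset (i + 1) := by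
  ext y
  simp only [Set.mem_sdiff, Set.mem_preimage, Iset, Set.mem_ofPred_eq,
    Nat.forall_lt_succ_right, Pi.add_apply, Pi.single_eq_same]
  rcases ZMod.two_cases (y i) with h | h <;>
    simp +contextual [h, Pi.single_eq_of_ne (Nat.ne_of_lt _),
      (by decide : (1 + 1 : ZMod 2) = 0)]

lemma measureReal_shell (i : ℕ) : muG.real (Iset i \ Iset (i + 1)) = muG.real (Iset (i + 1)) := by
  have hf : DependsOn ((Iset (i + 1)).indicator (1 : G → ℝ)) (Set.Iio (i + 1)) :=
    (dependsOn_mem_Iset _).indicator ((dependsOn_const 1).mono (Set.empty_subset _))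
  rw [← integral_indicator_one ((measurableSet_Iset i).diff (measurableSet_Iset (i + 1))),
    ← integral_indicator_one (measurableSet_Iset (i + 1)), Iset_sdiff_succ_eq_preimage]
  exact integral_comp_add_single (measurable_one.indicator (measurableSet_Iset _)) hf
    i.lt_succ_self

lemma Iset_succ_subset (i : ℕ) : Iset (i + 1) ⊆ Iset i :=
  fun _ hy k hk => hy k (hk.trans i.lt_succ_self)

lemma measureReal_Iset (i : ℕ) : muG.real (Iset i) = (2 ^ i)⁻¹ := by
  induction i with
  | zero => simp [Iset]
  | succ i ih =>
    have h := measureReal_sdiff (μ := muG) (Iset_succ_subset i) (measurableSet_Iset (i + 1))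
    rw [measureReal_shell, ih] at h
    rw [pow_succ, mul_inv]
    linarith

theorem integral_Dconj_on_shell_general (t : ℝ) (N n : ℕ)
    (h1 : 2^N ≤ n) (h2 : n < 2^(N+1)) (i : ℕ) (hi : i < N) :
    ∫ x in Iset i \ Iset (i+1), |Dconj t N n x| ∂muG
      = max (alpha n i : ℝ) (2 * (alpha (mOf t N) i : ℝ)) / 2^(i+1) := by
  set S := Iset i \ Iset (i + 1)
  set c := 2 * max (alpha n i : ℝ) (2 * (alpha (mOf t N) i : ℝ))
  set F := S.indicator fun y => |Dconj t N n y|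
  have hS : MeasurableSet S := (measurableSet_Iset i).diff (measurableSet_Iset (i + 1))
  have hFm : Measurable F := (measurable_Dconj t N n).abs.indicator hS
  have hF : DependsOn F (Set.Iio (N + 1)) :=
    ((dependsOn_mem_shell i).mono (Set.Iio_subset_Iio (by omega))).indicator
      fun _ _ h => congrArg abs (dependsOn_Dconj h2 h)
  have hFflip : Integrable (fun y => F (y + Pi.single N 1)) muG :=
    integrable_muG (hFm.comp (measurable_add_const _)) (hF.comp_add_right _)
  have hpair : ∀ y, F y + F (y + Pi.single N 1) = S.indicator (fun _ => c) y :=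
    shell_indicator_abs_Dconj_add_single h1 h2 hi
  calc ∫ x in S, |Dconj t N n x| ∂muG
      = (∫ y, F y ∂muG + ∫ y, F (y + Pi.single N 1) ∂muG) / 2 := by
        rw [integral_comp_add_single hFm hF N.lt_succ_self, integral_indicator hS]; ring
    _ = (∫ y, S.indicator (fun _ => c) y ∂muG) / 2 := by
        rw [← integral_add (integrable_muG hFm hF) hFflip]
        simp_rw [hpair]
    _ = _ := by
        rw [integral_indicator_const _ hS, smul_eq_mul, measureReal_shell, measureReal_Iset]
        ring

/-- `∫_{I_i \ I_{i+1}} |D̃_n^{(t)}| dμ = max(α_i(n), 2α_i(m))/2^{i+1}`. -/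
theorem integral_Dconj_on_shell (t : ℝ) (ht : t ∈ Set.Ico (0:ℝ) 1) (N n : ℕ)
    (h1 : 2^N ≤ n) (h2 : n < 2^(N+1)) (i : ℕ) (hi : i < N) :
    ∫ x in Iset i \ Iset (i+1), |Dconj t N n x| ∂muG
      = max (alpha n i : ℝ) (2 * (alpha (mOf t N) i : ℝ)) / 2^(i+1) :=
  integral_Dconj_on_shell_general t N n h1 h2 i hi
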